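/- arXiv:1910.12319 — 4 statements merged into one kernel-verified Lean document; each statement's English description precedes it below -/
import Mathlib

section
/- Let I be a subset of the natural numbers and let Σ_I = {1,...,b}^I be equipped with the metric d_I(σ,σ̃) = γρ^{min{i ∈ I : σ_i ≠ σ̃_i}} (with γ > 0, ρ ∈ (0,1)) and the uniform Bernoulli measure μ_I = ((1/b)∑_{q=1}^b δ_q)^I. If t ∈ (0, α] where α = log b / (-log ρ), and I = {⌊αk/t⌋ : k ∈ ℕ}, then Σ_I is t-regular: there is a constant c ≥ 1 such that for every σ ∈ Σ_I and every r ∈ (0, γρ], c⁻¹ r^t ≤ μ_I(B(σ,r)) ≤ c r^t. -/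
open MeasureTheory Metric Set

set_option maxHeartbeats 2000000 in
/-- t-regularity of Σ_I for I = {⌊αk/t⌋ : k ∈ ℕ}. -/
theorem sigmaI_t_regular
    (b : ℕ) (hb : 2 ≤ b) (γ ρ t : ℝ) (hγ : 0 < γ) (hρ : ρ ∈ Set.Ioo (0:ℝ) 1)
    (α : ℝ) (hα : α = Real.log b / (-Real.log ρ))
    (ht : t ∈ Set.Ioc (0:ℝ) α)
    (I : Set ℕ) (hI : I = {i : ℕ | ∃ k : ℕ, 1 ≤ k ∧ i = ⌊α * k / t⌋₊})
    [MetricSpace (I → Fin b)]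
    (hdist : ∀ σ τ : (I → Fin b), σ ≠ τ →
      dist σ τ = γ * ρ ^ sInf {i : ℕ | ∃ h : i ∈ I, σ ⟨i, h⟩ ≠ τ ⟨i, h⟩})
    (μ : Measure (I → Fin b)) [IsProbabilityMeasure μ]
    (hμ : ∀ (s : Finset I) (a : I → Fin b),
      μ {σ | ∀ i ∈ s, σ i = a i} = ((b : ENNReal))⁻¹ ^ s.card) :
    ∃ c : ℝ, 1 ≤ c ∧ ∀ σ : (I → Fin b), ∀ r ∈ Set.Ioc 0 (γ * ρ),
      ENNReal.ofReal (c⁻¹ * r ^ t) ≤ μ (ball σ r) ∧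
      μ (ball σ r) ≤ ENNReal.ofReal (c * r ^ t) := by
  classical
  obtain ⟨hρ0, hρ1⟩ := hρ
  obtain ⟨ht0, htα⟩ := ht
  have hb2 : (2:ℝ) ≤ (b:ℝ) := by exact_mod_cast hb
  have hb0 : (0:ℝ) < b := by linarith
  have hb1 : (1:ℝ) < b := by linarith
  have hlogρ : Real.log ρ < 0 := Real.log_neg hρ0 hρ1
  have hα0 : 0 < α := by
    rw [hα]; exact div_pos (Real.log_pos hb1) (by linarith)
  have hlρ : Real.log ρ ≠ 0 := ne_of_lt hlogρ
  have hρα : ρ ^ α = (b:ℝ)⁻¹ := by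
    rw [hα, Real.rpow_def_of_pos hρ0]
    have h1 : Real.log ρ * (Real.log b / -Real.log ρ) = -Real.log b := by
      rw [div_neg, mul_neg, mul_div_assoc']
      rw [mul_comm (Real.log ρ) (Real.log b), mul_div_assoc, div_self hlρ, mul_one]
    rw [h1, Real.exp_neg, Real.exp_log hb0]
  set c : ℝ := (γ/ρ) ^ t + (b:ℝ) * (γ*ρ) ^ (-t) + 1 with hc
  have hc1pos : 0 ≤ (γ/ρ) ^ t := Real.rpow_nonneg (by positivity) t
  have hc2pos : 0 ≤ (b:ℝ) * (γ*ρ) ^ (-t) := by positivity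
  have hc1 : 1 ≤ c := by rw [hc]; linarith
  refine ⟨c, hc1, ?_⟩
  intro σ r hr
  obtain ⟨hr0, hrle⟩ := hr
  -- the cut level L
  have hDne : {n : ℕ | γ * ρ ^ (n+1) < r}.Nonempty := by
    obtain ⟨n, hn⟩ := exists_pow_lt_of_lt_one (div_pos hr0 hγ) hρ1
    refine ⟨n, ?_⟩
    have h1 : ρ ^ (n+1) ≤ ρ ^ n := pow_le_pow_of_le_one hρ0.le hρ1.le (Nat.le_succ n)
    have h2 : ρ ^ n * γ < r := (lt_div_iff₀ hγ).mp hn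
    simp only [Set.mem_setOf_eq]
    nlinarith
  set L : ℕ := sInf {n : ℕ | γ * ρ ^ (n+1) < r} with hLdef
  have hL1 : γ * ρ ^ (L+1) < r := Nat.sInf_mem hDne
  have hL0 : r ≤ γ * ρ ^ L := by
    rcases Nat.eq_zero_or_pos L with h0 | hpos
    · rw [h0, pow_zero, mul_one]
      nlinarith
    · have hnm : L - 1 ∉ {n : ℕ | γ * ρ ^ (n+1) < r} :=
        Nat.notMem_of_lt_sInf (by omega)
      simp only [Set.mem_setOf_eq, not_lt] at hnm
      rwa [Nat.sub_add_cancel hpos] at hnm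
  have hmono : ∀ n : ℕ, n ≤ L → r ≤ γ * ρ ^ n := by
    intro n hn
    have : ρ ^ L ≤ ρ ^ n := pow_le_pow_of_le_one hρ0.le hρ1.le hn
    nlinarith
  have hmono' : ∀ n : ℕ, L < n → γ * ρ ^ n < r := by
    intro n hn
    have : ρ ^ n ≤ ρ ^ (L+1) := pow_le_pow_of_le_one hρ0.le hρ1.le hn
    nlinarith
  -- ball is a cylinder
  have hball : ball σ r = {τ : I → Fin b | ∀ i : I, (i:ℕ) ≤ L → τ i = σ i} := by
    ext τ
    simp only [mem_ball, Set.mem_setOf_eq]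
    constructor
    · intro hd i hiL
      by_contra hne
      have hτσ : τ ≠ σ := fun he => hne (by rw [he])
      rw [hdist τ σ hτσ] at hd
      have hiD : (i:ℕ) ∈ {j : ℕ | ∃ h : j ∈ I, τ ⟨j, h⟩ ≠ σ ⟨j, h⟩} := ⟨i.2, hne⟩
      have h1 : sInf {j : ℕ | ∃ h : j ∈ I, τ ⟨j, h⟩ ≠ σ ⟨j, h⟩} ≤ (i:ℕ) :=
        Nat.sInf_le hiD
      have h2 := hmono _ (h1.trans hiL)
      linarith
    · intro hS
      by_cases hτσ : τ = σ
      · rw [hτσ]; simpa using hr0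
      · rw [hdist τ σ hτσ]
        have hne : {j : ℕ | ∃ h : j ∈ I, τ ⟨j, h⟩ ≠ σ ⟨j, h⟩}.Nonempty := by
          obtain ⟨i, hi⟩ := Function.ne_iff.mp hτσ
          exact ⟨i, i.2, hi⟩
        obtain ⟨hmemI, hmemne⟩ := Nat.sInf_mem hne
        have hgt : L < sInf {j : ℕ | ∃ h : j ∈ I, τ ⟨j, h⟩ ≠ σ ⟨j, h⟩} := by
          by_contra hle
          push_neg at hle
          exact hmemne (hS ⟨_, hmemI⟩ hle)
        exact hmono' _ hgt
  -- the cylinder finset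
  have hfin : ((Subtype.val : I → ℕ) ⁻¹' Set.Iic L).Finite :=
    (Set.finite_Iic L).preimage Subtype.val_injective.injOn
  set s : Finset I := hfin.toFinset with hsdef
  have hmems : ∀ i : I, i ∈ s ↔ (i:ℕ) ≤ L := by
    intro i
    simp [hsdef, Set.Finite.mem_toFinset]
  have hseteq : {τ : I → Fin b | ∀ i : I, (i:ℕ) ≤ L → τ i = σ i}
      = {τ : I → Fin b | ∀ i ∈ s, τ i = σ i} := by
    ext τ
    simp only [Set.mem_setOf_eq]
    constructor
    · intro h i hi
      exact h i ((hmems i).mp hi)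
    · intro h i hi
      exact h i ((hmems i).mpr hi)
  have hμball : μ (ball σ r) = ((b:ENNReal))⁻¹ ^ s.card := by
    rw [hball, hseteq, hμ s σ]
  set N : ℕ := s.card with hNdef
  -- enumeration of I
  have hex : ∀ i : I, ∃ k : ℕ, 1 ≤ k ∧ (i:ℕ) = ⌊α * k / t⌋₊ := by
    intro i
    exact hI.subset i.2
  have hfI : ∀ k : ℕ, ⌊α * ((k+1:ℕ):ℝ) / t⌋₊ ∈ I := by
    intro k
    rw [hI]
    exact ⟨k+1, Nat.le_add_left 1 k, rfl⟩
  -- strict monotonicity of the enumeration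
  have hsm : ∀ k k' : ℕ, k < k' → ⌊α * ((k+1:ℕ):ℝ) / t⌋₊ < ⌊α * ((k'+1:ℕ):ℝ) / t⌋₊ := by
    intro k k' hkk
    have hk' : (k:ℝ) + 1 ≤ (k':ℝ) := by exact_mod_cast hkk
    have hstep : α * ((k+1:ℕ):ℝ) / t + 1 ≤ α * ((k'+1:ℕ):ℝ) / t := by
      rw [div_add' _ _ _ (ne_of_gt ht0), div_le_div_iff₀ ht0 ht0]
      push_cast
      nlinarith [mul_le_mul_of_nonneg_left (show (1:ℝ) ≤ (k':ℝ) - k by linarith) hα0.le]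
    have hfl : (⌊α * ((k+1:ℕ):ℝ) / t⌋₊ : ℝ) ≤ α * ((k+1:ℕ):ℝ) / t :=
      Nat.floor_le (by positivity)
    have hle : ((⌊α * ((k+1:ℕ):ℝ) / t⌋₊ + 1 : ℕ) : ℝ) ≤ α * ((k'+1:ℕ):ℝ) / t := by
      push_cast at hfl hstep ⊢
      linarith
    exact Nat.le_floor hle
  -- lower bound on N
  set M : ℕ := ⌊(L:ℝ) * t / α⌋₊ with hMdef
  have hMN : M ≤ N := by
    have hmaps : ∀ k ∈ Finset.range M, (⟨_, hfI k⟩ : I) ∈ s := by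
      intro k hk
      rw [Finset.mem_range] at hk
      rw [hmems]
      have h1 : (⌊α * ((k+1:ℕ):ℝ) / t⌋₊ : ℝ) ≤ α * ((k+1:ℕ):ℝ) / t :=
        Nat.floor_le (by positivity)
      have h2 : ((k+1:ℕ):ℝ) ≤ (M:ℝ) := by exact_mod_cast hk
      have h3 : (M:ℝ) ≤ (L:ℝ) * t / α := Nat.floor_le (by positivity)
      have h4 : α * ((k+1:ℕ):ℝ) / t ≤ (L:ℝ) := by
        rw [div_le_iff₀ ht0]
        calc α * ((k+1:ℕ):ℝ) ≤ α * ((L:ℝ) * t / α) := by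
              apply mul_le_mul_of_nonneg_left _ hα0.le
              linarith
          _ = (L:ℝ) * t := by field_simp
      have : (⌊α * ((k+1:ℕ):ℝ) / t⌋₊ : ℝ) ≤ (L:ℝ) := by linarith
      exact_mod_cast this
    have hinj : Set.InjOn (fun k => (⟨_, hfI k⟩ : I)) (Finset.range M) := by
      intro k _ k' _ h
      have hval : ⌊α * ((k+1:ℕ):ℝ) / t⌋₊ = ⌊α * ((k'+1:ℕ):ℝ) / t⌋₊ :=
        congrArg Subtype.val h
      rcases Nat.lt_trichotomy k k' with h' | h' | h'
      · exact absurd hval (Nat.ne_of_lt (hsm _ _ h'))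
      · exact h'
      · exact absurd hval.symm (Nat.ne_of_lt (hsm _ _ h'))
    have := Finset.card_le_card_of_injOn _ hmaps hinj
    simpa using this
  -- upper bound on N
  set Q : ℕ := ⌊((L:ℝ)+1) * t / α⌋₊ with hQdef
  have hNQ : N ≤ Q := by
    have hmaps : ∀ i ∈ s, (hex i).choose ∈ Finset.Icc 1 Q := by
      intro i hi
      obtain ⟨hk1, hk2⟩ := (hex i).choose_spec
      rw [Finset.mem_Icc]
      refine ⟨hk1, ?_⟩
      have hiL : (i:ℕ) ≤ L := (hmems i).mp hi
      have h1 : α * ((hex i).choose : ℝ) / t < (⌊α * ((hex i).choose : ℝ) / t⌋₊ : ℝ) + 1 :=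
        Nat.lt_floor_add_one _
      have h2 : (⌊α * ((hex i).choose : ℝ) / t⌋₊ : ℝ) ≤ (L:ℝ) := by
        rw [← hk2]; exact_mod_cast hiL
      have h3 : α * ((hex i).choose : ℝ) / t < (L:ℝ) + 1 := by linarith
      have h4 : α * ((hex i).choose : ℝ) < ((L:ℝ)+1) * t := by
        rw [div_lt_iff₀ ht0] at h3
        linarith
      have h5 : ((hex i).choose : ℝ) ≤ ((L:ℝ)+1) * t / α := by
        rw [le_div_iff₀ hα0]
        nlinarith
      exact Nat.le_floor h5
    have hinj : Set.InjOn (fun i => (hex i).choose) (s : Set I) := by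
      intro i _ i' _ h
      have h1 := (hex i).choose_spec.2
      have h2 := (hex i').choose_spec.2
      apply Subtype.ext
      rw [h1, h2]
      simp only at h
      rw [h]
    have := Finset.card_le_card_of_injOn _ hmaps hinj
    simpa [Nat.card_Icc] using this
  -- real exponent bounds
  have hN1 : (L:ℝ) * t - α ≤ α * N := by
    have h1 : (L:ℝ) * t / α < (M:ℝ) + 1 := by
      have := Nat.lt_floor_add_one ((L:ℝ) * t / α)
      exact_mod_cast this
    have h2 : (M:ℝ) ≤ (N:ℝ) := by exact_mod_cast hMN
    rw [div_lt_iff₀ hα0] at h1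
    nlinarith
  have hN2 : α * N ≤ ((L:ℝ)+1) * t := by
    have h1 : (Q:ℝ) ≤ ((L:ℝ)+1) * t / α := Nat.floor_le (by positivity)
    have h2 : (N:ℝ) ≤ (Q:ℝ) := by exact_mod_cast hNQ
    have h3 : (N:ℝ) ≤ ((L:ℝ)+1) * t / α := by linarith
    rw [le_div_iff₀ hα0] at h3
    linarith
  -- measure in real terms
  have hμreal : ((b:ℝ)⁻¹) ^ N = ρ ^ (α * (N:ℝ)) := by
    rw [Real.rpow_mul hρ0.le, Real.rpow_natCast, hρα]
  -- upper estimate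
  have hrt0 : 0 < r ^ t := Real.rpow_pos_of_pos hr0 t
  have hup : ρ ^ (α * (N:ℝ)) ≤ c * r ^ t := by
    have h1 : ρ ^ (α * (N:ℝ)) ≤ ρ ^ ((L:ℝ) * t - α) :=
      Real.rpow_le_rpow_of_exponent_ge hρ0 hρ1.le hN1
    have h2 : ρ ^ ((L:ℝ) * t - α) = ((ρ^L : ℝ)) ^ t * (b:ℝ) := by
      rw [Real.rpow_sub hρ0, hρα, div_eq_mul_inv, inv_inv]
      congr 1
      rw [← Real.rpow_natCast ρ L, ← Real.rpow_mul hρ0.le]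
    have h3 : (ρ^L : ℝ) ≤ r / (γ * ρ) := by
      rw [le_div_iff₀ (by positivity)]
      rw [pow_succ] at hL1
      nlinarith
    have h4 : ((ρ^L : ℝ)) ^ t ≤ (r / (γ * ρ)) ^ t :=
      Real.rpow_le_rpow (by positivity) h3 ht0.le
    have h5 : (r / (γ * ρ)) ^ t = r ^ t * (γ*ρ) ^ (-t) := by
      rw [Real.div_rpow hr0.le (by positivity), Real.rpow_neg (by positivity),
        div_eq_mul_inv]
    calc ρ ^ (α * (N:ℝ)) ≤ ((ρ^L : ℝ)) ^ t * (b:ℝ) := by rw [← h2]; exact h1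
      _ ≤ (r ^ t * (γ*ρ) ^ (-t)) * (b:ℝ) := by
          apply mul_le_mul_of_nonneg_right _ hb0.le
          rw [← h5]; exact h4
      _ = ((b:ℝ) * (γ*ρ) ^ (-t)) * r ^ t := by ring
      _ ≤ c * r ^ t := by
          apply mul_le_mul_of_nonneg_right _ hrt0.le
          rw [hc]; linarith
  -- lower estimate
  have hlow : c⁻¹ * r ^ t ≤ ρ ^ (α * (N:ℝ)) := by
    have h1 : ρ ^ (((L:ℝ)+1) * t) ≤ ρ ^ (α * (N:ℝ)) :=
      Real.rpow_le_rpow_of_exponent_ge hρ0 hρ1.le hN2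
    have h2 : ρ ^ (((L:ℝ)+1) * t) = ((ρ^(L+1) : ℝ)) ^ t := by
      rw [← Real.rpow_natCast ρ (L+1), ← Real.rpow_mul hρ0.le]
      push_cast
      ring_nf
    have h3 : (ρ/γ) * r ≤ (ρ^(L+1) : ℝ) := by
      rw [pow_succ]
      have : r / γ ≤ ρ ^ L := by
        rw [div_le_iff₀ hγ]; nlinarith
      rw [div_mul_eq_mul_div, div_le_iff₀ hγ]
      nlinarith
    have h4 : ((ρ/γ) * r) ^ t ≤ ((ρ^(L+1) : ℝ)) ^ t :=
      Real.rpow_le_rpow (by positivity) h3 ht0.le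
    have h5 : ((ρ/γ) * r) ^ t = (ρ/γ) ^ t * r ^ t :=
      Real.mul_rpow (by positivity) hr0.le
    have hpos : 0 < (ρ/γ) ^ t := Real.rpow_pos_of_pos (by positivity) t
    have h6 : c⁻¹ ≤ (ρ/γ) ^ t := by
      have hinv : ((ρ/γ) ^ t)⁻¹ = (γ/ρ) ^ t := by
        rw [← Real.inv_rpow (by positivity), inv_div]
      have hcge : ((ρ/γ) ^ t)⁻¹ ≤ c := by
        rw [hinv, hc]; linarith
      have := inv_anti₀ (by positivity) hcge
      rwa [inv_inv] at this
    calc c⁻¹ * r ^ t ≤ (ρ/γ) ^ t * r ^ t :=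
          mul_le_mul_of_nonneg_right h6 hrt0.le
      _ = ((ρ/γ) * r) ^ t := h5.symm
      _ ≤ ((ρ^(L+1) : ℝ)) ^ t := h4
      _ = ρ ^ (((L:ℝ)+1) * t) := h2.symm
      _ ≤ ρ ^ (α * (N:ℝ)) := h1
  -- transfer to ENNReal
  have hofReal : μ (ball σ r) = ENNReal.ofReal (((b:ℝ)⁻¹) ^ N) := by
    rw [hμball, ENNReal.ofReal_pow (by positivity), ENNReal.ofReal_inv_of_pos hb0,
      ENNReal.ofReal_natCast]
  constructor
  · rw [hofReal]
    apply ENNReal.ofReal_le_ofReal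
    rw [hμreal]
    exact hlow
  · rw [hofReal]
    apply ENNReal.ofReal_le_ofReal
    rw [hμreal]
    exact hup
end

section
/- Let X₁, X₂ be compact metric spaces with Borel probability measures μ₁, μ₂, where μ₂ has full support and X₂ has a countable basis. Equip X = X₁ × X₂ with the max metric, let (r_n) be positive reals, let (ω_n) be i.i.d. with law μ₁ × μ₂, and let E = limsup_n B(ω_n, r_n). Define A = {x₁ ∈ X₁ : ∑_n μ₁(B(x₁, r_n)) = ∞} and B(ω) = {x₁ ∈ X₁ : the fibre E^{x₁}(ω) = {x₂ : (x₁,x₂) ∈ E(ω)} is residual in X₂}. Then almost surely μ₁(A \ B(ω)) = 0. -/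
/-!
For a fixed `x₁` with `∑ μ₁(B(x₁, r_n)) = ∞` and a fixed nonempty basic open set `V ⊆ X₂`,
the events `ω_n ∈ B(x₁, r_n) × V` are independent with probabilities `μ₁(B(x₁, r_n)) μ₂(V)`,
whose sum diverges because `μ₂` has full support; by the second Borel–Cantelli lemma they occur
infinitely often almost surely. For the max metric each occurrence puts `(ω_n)₂ ∈ V` into the
fibre of `B(ω_n, r_n)` over `x₁`, so the fibres of the tails `⋃_{n ≥ N} B(ω_n, r_n)` are dense
open and the fibre of `E(ω)` is residual. A countable basis makes this hold simultaneously for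
all `V`, and Fubini exchanges "for every `x₁ ∈ A`, almost surely" with "almost surely, for
`μ₁`-a.e. `x₁ ∈ A`".
-/

open MeasureTheory Metric Set Filter TopologicalSpace ProbabilityTheory

theorem ae_frequently_mem_of_tsum_eq_top {α : Type*} [MeasurableSpace α] {ν : Measure α}
    {P : Measure (ℕ → α)} [IsProbabilityMeasure P]
    (hP : ∀ (s : Finset ℕ) (A : ℕ → Set α), (∀ n, MeasurableSet (A n)) →
      P {ω | ∀ n ∈ s, ω n ∈ A n} = ∏ n ∈ s, ν (A n))
    {T : ℕ → Set α} (hT : ∀ n, MeasurableSet (T n)) (hsum : ∑' n, ν (T n) = ⊤) :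
    ∀ᵐ ω ∂P, ∃ᶠ n in atTop, ω n ∈ T n := by
  set s : ℕ → Set (ℕ → α) := fun n => {ω | ω n ∈ T n}
  have hs : ∀ n, MeasurableSet (s n) := fun n => measurable_pi_apply n (hT n)
  have hP_biInter : ∀ F : Finset ℕ, P (⋂ n ∈ F, s n) = ∏ n ∈ F, ν (T n) := fun F => by
    rw [← hP F T hT]
    congr 1
    ext ω
    simp [s]
  have hP_single : ∀ n, P (s n) = ν (T n) := fun n => by simpa using hP_biInter {n}
  have hindep : iIndepSet s P := (iIndepSet_iff_meas_biInter hs).2 fun F => by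
    simp only [hP_biInter, hP_single]
  have hlimsup : P (limsup s atTop) = 1 :=
    measure_limsup_eq_one hs hindep (by simpa only [hP_single] using hsum)
  have hae := (ae_mem_iff_measure_eq
    (MeasurableSet.measurableSet_limsup hs).nullMeasurableSet).2 (by rw [hlimsup, measure_univ])
  exact hae.mono fun ω hω => mem_limsup_iff_frequently_mem.1 hω

theorem measurable_measure_ball {X : Type*} [PseudoMetricSpace X] [SecondCountableTopology X]
    [MeasurableSpace X] [OpensMeasurableSpace X] (μ : Measure X) [SFinite μ] (ρ : ℝ) :
    Measurable fun x => μ (ball x ρ) :=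
  measurable_measure_prodMk_left
    (isOpen_lt (continuous_snd.dist continuous_fst) continuous_const).measurableSet

theorem iInter_iUnion_ge_mem_residual {Y : Type*} [TopologicalSpace Y] {U : ℕ → Set Y}
    (hU : ∀ n, IsOpen (U n)) {b : Set (Set Y)} (hb : IsTopologicalBasis b)
    (h : ∀ V ∈ b, V.Nonempty → ∃ᶠ n in atTop, (V ∩ U n).Nonempty) :
    ⋂ N, ⋃ n ≥ N, U n ∈ residual Y :=
  countable_iInter_mem.2 fun N => residual_of_dense_open (isOpen_biUnion fun n _ => hU n) <|
    hb.dense_iff.2 fun V hV hne => by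
      obtain ⟨n, hn, y, hyV, hyU⟩ := frequently_atTop.1 (h V hV hne) N
      exact ⟨y, hyV, mem_biUnion hn hyU⟩

section FrequentlyHits

variable {X₁ X₂ : Type*} [PseudoMetricSpace X₁] [PseudoMetricSpace X₂]

def FrequentlyHits (b : Set (Set X₂)) (r : ℕ → ℝ) (x : X₁) (ω : ℕ → X₁ × X₂) : Prop :=
  ∀ V ∈ b, V.Nonempty → ∃ᶠ n in atTop, ω n ∈ ball x (r n) ×ˢ V

theorem FrequentlyHits.fibre_mem_residual {b : Set (Set X₂)} (hb : IsTopologicalBasis b)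
    {r : ℕ → ℝ} {x : X₁} {ω : ℕ → X₁ × X₂} (h : FrequentlyHits b r x ω) :
    {y | (x, y) ∈ ⋂ N, ⋃ n ≥ N, ball (ω n) (r n)} ∈ residual X₂ := by
  have hfibre : {y | (x, y) ∈ ⋂ N, ⋃ n ≥ N, ball (ω n) (r n)}
      = ⋂ N, ⋃ n ≥ N, {y | (x, y) ∈ ball (ω n) (r n)} := by
    ext
    simp
  rw [hfibre]
  refine iInter_iUnion_ge_mem_residual (fun n => isOpen_ball.preimage (.prodMk_right x)) hb
    fun V hV hne => (h V hV hne).mono fun n ⟨hx, hy⟩ => ⟨(ω n).2, hy, ?_⟩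
  rw [mem_ofPred_eq, mem_ball, Prod.dist_eq, dist_self, max_eq_left dist_nonneg]
  exact mem_ball'.1 hx

variable [MeasurableSpace X₁] [OpensMeasurableSpace X₁]
  [MeasurableSpace X₂] [OpensMeasurableSpace X₂]

theorem ae_frequentlyHits {μ₁ : Measure X₁} {μ₂ : Measure X₂} [SFinite μ₂]
    {P : Measure (ℕ → X₁ × X₂)} [IsProbabilityMeasure P]
    (hP : ∀ (s : Finset ℕ) (A : ℕ → Set (X₁ × X₂)), (∀ n, MeasurableSet (A n)) →
      P {ω | ∀ n ∈ s, ω n ∈ A n} = ∏ n ∈ s, (μ₁.prod μ₂) (A n))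
    (hfull : ∀ U : Set X₂, IsOpen U → U.Nonempty → 0 < μ₂ U)
    {b : Set (Set X₂)} (hbc : b.Countable) (hbo : ∀ V ∈ b, IsOpen V)
    {r : ℕ → ℝ} {x : X₁} (hx : ∑' n, μ₁ (ball x (r n)) = ⊤) :
    ∀ᵐ ω ∂P, FrequentlyHits b r x ω := by
  refine (ae_ball_iff hbc).2 fun V hV => eventually_imp_distrib_left.2 fun hne =>
    ae_frequently_mem_of_tsum_eq_top hP
      (fun n => measurableSet_ball.prod (hbo V hV).measurableSet) ?_
  simp_rw [Measure.prod_prod, ENNReal.tsum_mul_right, hx]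
  exact ENNReal.top_mul (hfull V (hbo V hV) hne).ne'

variable [SecondCountableTopology X₁] [SecondCountableTopology X₂]

theorem measurableSet_setOf_frequentlyHits {b : Set (Set X₂)} (hbc : b.Countable)
    (hbo : ∀ V ∈ b, IsOpen V) (r : ℕ → ℝ) :
    MeasurableSet {q : X₁ × (ℕ → X₁ × X₂) | FrequentlyHits b r q.1 q.2} := by
  have := hbc.to_subtype
  have hhit : ∀ V ∈ b, ∀ n, IsOpen {q : X₁ × (ℕ → X₁ × X₂) | q.2 n ∈ ball q.1 (r n) ×ˢ V} :=
    fun V hV n => (isOpen_lt (by fun_prop) continuous_const).inter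
      ((hbo V hV).preimage (by fun_prop))
  have hfreq : ∀ V ∈ b, Measurable fun q : X₁ × (ℕ → X₁ × X₂) =>
      ∃ᶠ n in atTop, q.2 n ∈ ball q.1 (r n) ×ˢ V := fun V hV => by
    simp_rw [frequently_atTop]
    exact .forall fun N => .exists fun n => measurable_const.and
      (measurableSet_setOfPred.1 (hhit V hV n).measurableSet)
  have hall := Measurable.forall fun V : b =>
    (measurable_const.imp (hfreq V V.2) : Measurable fun q => (V : Set X₂).Nonempty → _)
  simpa only [FrequentlyHits, Subtype.forall] using hall.setOf

end FrequentlyHits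

theorem ae_fibre_residual_on_divergence_set_general
    {X₁ X₂ : Type*} [MetricSpace X₁] [CompactSpace X₁]
    [MetricSpace X₂] [SecondCountableTopology X₂]
    [MeasurableSpace X₁] [BorelSpace X₁] [MeasurableSpace X₂] [BorelSpace X₂]
    (μ₁ : Measure X₁) [IsProbabilityMeasure μ₁]
    (μ₂ : Measure X₂) [IsProbabilityMeasure μ₂]
    (hfull : ∀ U : Set X₂, IsOpen U → U.Nonempty → 0 < μ₂ U)
    (r : ℕ → ℝ)
    (P : Measure (ℕ → X₁ × X₂)) [IsProbabilityMeasure P]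
    (hP : ∀ (s : Finset ℕ) (A : ℕ → Set (X₁ × X₂)), (∀ n, MeasurableSet (A n)) →
      P {ω | ∀ n ∈ s, ω n ∈ A n} = ∏ n ∈ s, (μ₁.prod μ₂) (A n))
    (E : (ℕ → X₁ × X₂) → Set (X₁ × X₂))
    (hE : ∀ ω, E ω = ⋂ N, ⋃ n, ⋃ (_ : N ≤ n), ball (ω n) (r n))
    (A : Set X₁) (hA : A = {x₁ : X₁ | ∑' n, μ₁ (ball x₁ (r n)) = ⊤})
    (B : (ℕ → X₁ × X₂) → Set X₁)
    (hB : ∀ ω, B ω = {x₁ : X₁ | {x₂ : X₂ | (x₁, x₂) ∈ E ω} ∈ residual X₂}) :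
    ∀ᵐ ω ∂P, μ₁ (A \ B ω) = 0 := by
  set b := countableBasis X₂
  have hbc : b.Countable := countable_countableBasis X₂
  have hbo : ∀ V ∈ b, IsOpen V := fun V hV => isOpen_of_mem_countableBasis hV
  have hAm : MeasurableSet A := by
    rw [hA]
    exact (Measurable.tsum fun n => measurable_measure_ball μ₁ (r n)) (measurableSet_singleton ⊤)
  have hmeas : MeasurableSet {q : X₁ × (ℕ → X₁ × X₂) | q.1 ∈ A → FrequentlyHits b r q.1 q.2} :=
    ((measurableSet_setOfPred.1 (measurable_fst hAm)).imp
      (measurableSet_setOfPred.1 (measurableSet_setOf_frequentlyHits hbc hbo r))).setOf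
  have hhits : ∀ᵐ ω ∂P, ∀ᵐ x ∂μ₁, x ∈ A → FrequentlyHits b r x ω :=
    (Measure.ae_ae_comm hmeas).1 <| ae_of_all _ fun x => eventually_imp_distrib_left.2 fun hx =>
      ae_frequentlyHits hP hfull hbc hbo (by rwa [hA] at hx)
  filter_upwards [hhits] with ω hω
  refine measure_mono_null ?_ (ae_iff.1 hω)
  rintro x ⟨hxA, hxB⟩ hx
  refine hxB ?_
  rw [hB, mem_ofPred_eq, hE]
  exact (hx hxA).fibre_mem_residual (isBasis_countableBasis X₂)

/-- Lemma (A\B): almost surely, μ₁-a.e. point x₁ with divergent series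
∑ μ₁(B(x₁,r_n)) has a residual fibre E^{x₁}. -/
theorem ae_fibre_residual_on_divergence_set
    {X₁ X₂ : Type*} [MetricSpace X₁] [CompactSpace X₁]
    [MetricSpace X₂] [CompactSpace X₂] [SecondCountableTopology X₂]
    [MeasurableSpace X₁] [BorelSpace X₁] [MeasurableSpace X₂] [BorelSpace X₂]
    (μ₁ : Measure X₁) [IsProbabilityMeasure μ₁]
    (μ₂ : Measure X₂) [IsProbabilityMeasure μ₂]
    (hfull : ∀ U : Set X₂, IsOpen U → U.Nonempty → 0 < μ₂ U)
    (r : ℕ → ℝ) (hr : ∀ n, 0 < r n)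
    (P : Measure (ℕ → X₁ × X₂)) [IsProbabilityMeasure P]
    (hP : ∀ (s : Finset ℕ) (A : ℕ → Set (X₁ × X₂)), (∀ n, MeasurableSet (A n)) →
      P {ω | ∀ n ∈ s, ω n ∈ A n} = ∏ n ∈ s, (μ₁.prod μ₂) (A n))
    (E : (ℕ → X₁ × X₂) → Set (X₁ × X₂))
    (hE : ∀ ω, E ω = ⋂ N, ⋃ n, ⋃ (_ : N ≤ n), ball (ω n) (r n))
    (A : Set X₁) (hA : A = {x₁ : X₁ | ∑' n, μ₁ (ball x₁ (r n)) = ⊤})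
    (B : (ℕ → X₁ × X₂) → Set X₁)
    (hB : ∀ ω, B ω = {x₁ : X₁ | {x₂ : X₂ | (x₁, x₂) ∈ E ω} ∈ residual X₂}) :
    ∀ᵐ ω ∂P, μ₁ (A \ B ω) = 0 :=
  ae_fibre_residual_on_divergence_set_general μ₁ μ₂ hfull r P hP E hE A hA B hB
end

section
/- Let X₁, X₂ be compact metric spaces with Borel probability measures μ₁, μ₂, μ₂ of full support, X₂ with countable basis, and X = X₁ × X₂ with the max metric. Fix x₁ ∈ X₁ with ∑_n μ₁(B(x₁, r_n)) = ∞. If (ω_n) = ((ω_{n,1}, ω_{n,2})) is i.i.d. with law μ₁ × μ₂ and E = limsup_n B(ω_n, r_n), then almost surely the fibre E^{x₁} = {x₂ ∈ X₂ : (x₁, x₂) ∈ E} is a residual subset of X₂; in particular it is nonempty. -/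
open MeasureTheory Metric Set

/-- If ∑ μ₁(B(x₁,r_n)) = ∞, then a.s. the fibre of the random limsup set above
x₁ is residual in X₂, in particular nonempty. -/
theorem ae_fibre_residual_of_divergence
    {X₁ X₂ : Type*} [MetricSpace X₁] [CompactSpace X₁]
    [MetricSpace X₂] [CompactSpace X₂] [SecondCountableTopology X₂]
    [MeasurableSpace X₁] [BorelSpace X₁] [MeasurableSpace X₂] [BorelSpace X₂]
    (μ₁ : Measure X₁) [IsProbabilityMeasure μ₁]
    (μ₂ : Measure X₂) [IsProbabilityMeasure μ₂]
    (hfull : ∀ U : Set X₂, IsOpen U → U.Nonempty → 0 < μ₂ U)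
    (r : ℕ → ℝ) (hr : ∀ n, 0 < r n)
    (x₁ : X₁) (hdiv : ∑' n, μ₁ (ball x₁ (r n)) = ⊤)
    (P : Measure (ℕ → X₁ × X₂)) [IsProbabilityMeasure P]
    (hP : ∀ (s : Finset ℕ) (A : ℕ → Set (X₁ × X₂)), (∀ n, MeasurableSet (A n)) →
      P {ω | ∀ n ∈ s, ω n ∈ A n} = ∏ n ∈ s, (μ₁.prod μ₂) (A n))
    (E : (ℕ → X₁ × X₂) → Set (X₁ × X₂))
    (hE : ∀ ω, E ω = ⋂ N, ⋃ n, ⋃ (_ : N ≤ n), ball (ω n) (r n)) :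
    ∀ᵐ ω ∂P, {x₂ : X₂ | (x₁, x₂) ∈ E ω} ∈ residual X₂ ∧
      {x₂ : X₂ | (x₁, x₂) ∈ E ω}.Nonempty := by
  have hX₂ : Nonempty X₂ := by
    by_contra h
    rw [not_nonempty_iff] at h
    have h1 : μ₂ (univ : Set X₂) = 1 := measure_univ
    simp [Set.eq_empty_of_isEmpty (Set.univ : Set X₂)] at h1
  obtain ⟨B, hBc, -, hB⟩ := TopologicalSpace.exists_countable_basis X₂
  -- the countable family of relevant basic open sets
  set S : Set (Set X₂) := {V ∈ B | V.Nonempty} with hS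
  have hSc : S.Countable := hBc.mono (sep_subset _ _)
  -- key almost sure statement for a single basic open set
  have key : ∀ V ∈ S, ∀ᵐ ω ∂P, ∀ N : ℕ, ∃ n, N ≤ n ∧
      (ω n).1 ∈ ball x₁ (r n) ∧ (ω n).2 ∈ V := by
    rintro V ⟨hVB, hVne⟩
    have hVopen : IsOpen V := hB.isOpen hVB
    set A : ℕ → Set (X₁ × X₂) := fun n => ball x₁ (r n) ×ˢ V with hA
    have hAm : ∀ n, MeasurableSet (A n) := fun n =>
      (isOpen_ball.prod hVopen).measurableSet
    set s : ℕ → Set (ℕ → X₁ × X₂) := fun n => (fun ω => ω n) ⁻¹' (A n) with hs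
    have hmeas : ∀ n, MeasurableSet (s n) := fun n =>
      (measurable_pi_apply n) (hAm n)
    have hrewrite : ∀ t : Finset ℕ, {ω : ℕ → X₁ × X₂ | ∀ n ∈ t, ω n ∈ A n}
        = ⋂ n ∈ t, s n := by
      intro t; ext ω; simp [hs, Set.mem_iInter]
    have hsingle : ∀ n, P (s n) = μ₁ (ball x₁ (r n)) * μ₂ V := by
      intro n
      have h := hP {n} A hAm
      rw [hrewrite {n}] at h
      simpa [hA, Measure.prod_prod] using h
    have hindep : ProbabilityTheory.iIndepSet s P := by
      rw [ProbabilityTheory.iIndepSet_iff_meas_biInter hmeas]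
      intro t
      have h := hP t A hAm
      rw [hrewrite t] at h
      rw [h]
      refine Finset.prod_congr rfl fun n _ => ?_
      rw [hsingle n, hA, Measure.prod_prod]
    have hdiv' : ∑' n, P (s n) = ⊤ := by
      simp_rw [hsingle]
      rw [ENNReal.tsum_mul_right, hdiv, ENNReal.top_mul (hfull V hVopen hVne).ne']
    have hone := ProbabilityTheory.measure_limsup_eq_one hmeas hindep hdiv'
    have hml : MeasurableSet (Filter.limsup s Filter.atTop) :=
      MeasurableSet.measurableSet_limsup hmeas
    have hae : ∀ᵐ ω ∂P, ω ∈ Filter.limsup s Filter.atTop := by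
      rw [ae_iff]
      have : {ω | ¬ ω ∈ Filter.limsup s Filter.atTop}
          = (Filter.limsup s Filter.atTop)ᶜ := rfl
      rw [this, measure_compl hml (measure_ne_top _ _), hone, measure_univ]
      exact tsub_self 1
    filter_upwards [hae] with ω hω N
    rw [Filter.limsup_eq_iInf_iSup_of_nat] at hω
    simp only [Set.iInf_eq_iInter, Set.iSup_eq_iUnion, Set.mem_iInter, Set.mem_iUnion] at hω
    obtain ⟨n, hn, hmem⟩ := hω N
    exact ⟨n, hn, by simpa [hs, hA, Set.mem_prod] using hmem⟩
  have keyall : ∀ᵐ ω ∂P, ∀ V ∈ S, ∀ N : ℕ, ∃ n, N ≤ n ∧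
      (ω n).1 ∈ ball x₁ (r n) ∧ (ω n).2 ∈ V := (ae_ball_iff hSc).2 key
  filter_upwards [keyall] with ω hω
  -- the fibre as a countable intersection of open dense sets
  set U : ℕ → Set X₂ := fun N => ⋃ n, ⋃ (_ : N ≤ n),
    {x₂ : X₂ | (x₁, x₂) ∈ ball (ω n) (r n)} with hU
  have hFib : {x₂ : X₂ | (x₁, x₂) ∈ E ω} = ⋂ N, U N := by
    ext x₂
    simp [hE, hU, Set.mem_iInter, Set.mem_iUnion]
  have hUopen : ∀ N, IsOpen (U N) := by
    intro N
    refine isOpen_iUnion fun n => isOpen_iUnion fun _ => ?_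
    exact isOpen_ball.preimage (Continuous.prodMk_right x₁)
  have hUdense : ∀ N, Dense (U N) := by
    intro N
    rw [dense_iff_inter_open]
    intro W hWopen ⟨w, hw⟩
    obtain ⟨V, hVB, hwV, hVW⟩ := hB.exists_subset_of_mem_open hw hWopen
    obtain ⟨n, hn, h1, h2⟩ := hω V ⟨hVB, ⟨w, hwV⟩⟩ N
    refine ⟨(ω n).2, hVW h2, ?_⟩
    rw [hU]
    simp only [Set.mem_iUnion]
    refine ⟨n, hn, ?_⟩
    simp only [Set.mem_setOf_eq, mem_ball, Prod.dist_eq, dist_self]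
    exact max_lt (by rwa [mem_ball, dist_comm] at h1) (hr n)
  have hres : {x₂ : X₂ | (x₁, x₂) ∈ E ω} ∈ residual X₂ := by
    rw [hFib]
    exact countable_iInter_mem.2 fun N => residual_of_dense_open (hUopen N) (hUdense N)
  exact ⟨hres, (dense_of_mem_residual hres).nonempty⟩
end

section
/- Let t ∈ (0, α] with α = log b / (-log ρ), b ≥ 2 an integer, ρ ∈ (0,1), and let I = {⌊αk/t⌋ : k ∈ ℕ, k ≥ 1}. Then the map k ↦ ⌊αk/t⌋ is strictly increasing, and for consecutive elements i_k = ⌊αk/t⌋ one has ρ^{α k} comparable to (γρ^{i_k})^t uniformly in k, i.e., there is a constant C ≥ 1 independent of k with C⁻¹ (γρ^{i_k})^t ≤ ρ^{αk} ≤ C (γρ^{i_{k+1}})^t. -/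
/-- Key computation for t-regularity of Σ_I: k ↦ ⌊αk/t⌋ is strictly increasing
and ρ^{αk} is comparable to (γρ^{i_k})^t uniformly in k. -/
theorem floor_index_comparability
    (b : ℕ) (hb : 2 ≤ b) (γ ρ t : ℝ) (hγ : 0 < γ) (hρ : ρ ∈ Set.Ioo (0:ℝ) 1)
    (α : ℝ) (hα : α = Real.log b / (-Real.log ρ))
    (ht : t ∈ Set.Ioc (0:ℝ) α)
    (i : ℕ → ℕ) (hi : ∀ k, i k = ⌊α * k / t⌋₊) :
    StrictMono i ∧
    ∃ C : ℝ, 1 ≤ C ∧ ∀ k : ℕ, 1 ≤ k →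
      C⁻¹ * (γ * ρ ^ (i k)) ^ t ≤ ρ ^ (α * k) ∧
      ρ ^ (α * k) ≤ C * (γ * ρ ^ (i (k + 1))) ^ t := by
  obtain ⟨hρ0, hρ1⟩ := hρ
  obtain ⟨ht0, htα⟩ := ht
  have hlogρ : Real.log ρ < 0 := Real.log_neg hρ0 hρ1
  have hb1 : (1:ℝ) < b := by exact_mod_cast lt_of_lt_of_le one_lt_two hb
  have hlogb : 0 < Real.log b := Real.log_pos hb1
  have hα0 : 0 < α := by rw [hα]; exact div_pos hlogb (by linarith)
  have hαt : t ≤ α := htα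
  -- basic floor bounds
  have hfl : ∀ k : ℕ, t * (i k : ℝ) ≤ α * k := by
    intro k
    rw [hi]
    have h := Nat.floor_le (show (0:ℝ) ≤ α * k / t by positivity)
    calc t * (⌊α * k / t⌋₊ : ℝ) ≤ t * (α * k / t) := by nlinarith
      _ = α * k := by field_simp
  have hfl' : ∀ k : ℕ, α * k - α ≤ t * (i k : ℝ) := by
    intro k
    rw [hi]
    have h := Nat.lt_floor_add_one (α * k / t)
    have h2 : α * k / t * t < ((⌊α * k / t⌋₊ : ℝ) + 1) * t := by
      exact mul_lt_mul_of_pos_right h ht0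
    have h3 : α * k / t * t = α * k := by field_simp
    nlinarith
  constructor
  · apply strictMono_nat_of_lt_succ
    intro k
    have h2 : i k + 1 ≤ i (k + 1) := by
      rw [hi, hi]
      apply Nat.le_floor
      have h := Nat.floor_le (show (0:ℝ) ≤ α * k / t by positivity)
      have h4 : (1:ℝ) ≤ α / t := (one_le_div ht0).2 htα
      have h5 : α * ((k:ℝ) + 1) / t = α * k / t + α / t := by ring
      push_cast
      rw [h5]
      linarith
    omega
  · refine ⟨max 1 (max (γ ^ t * ρ ^ (-α)) (γ ^ (-t) * ρ ^ (-α))), le_max_left _ _, ?_⟩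
    intro k _
    set C : ℝ := max 1 (max (γ ^ t * ρ ^ (-α)) (γ ^ (-t) * ρ ^ (-α))) with hC
    have hC0 : (0:ℝ) < C := lt_of_lt_of_le one_pos (le_max_left _ _)
    have hC1 : γ ^ t * ρ ^ (-α) ≤ C := le_trans (le_max_left _ _) (le_max_right _ _)
    have hC2 : γ ^ (-t) * ρ ^ (-α) ≤ C := le_trans (le_max_right _ _) (le_max_right _ _)
    have hrw : ∀ m : ℕ, (γ * ρ ^ m) ^ t = γ ^ t * ρ ^ (t * (m:ℝ)) := by
      intro m
      rw [Real.mul_rpow hγ.le (pow_nonneg hρ0.le m), ← Real.rpow_natCast ρ m,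
        ← Real.rpow_mul hρ0.le, mul_comm (m:ℝ) t]
    have hγt : (0:ℝ) < γ ^ t := Real.rpow_pos_of_pos hγ t
    have hγt' : (0:ℝ) < γ ^ (-t) := Real.rpow_pos_of_pos hγ (-t)
    have hρα : (0:ℝ) < ρ ^ (-α) := Real.rpow_pos_of_pos hρ0 (-α)
    have hραk : (0:ℝ) < ρ ^ (α * k) := Real.rpow_pos_of_pos hρ0 _
    have hγγ : γ ^ t * γ ^ (-t) = 1 := by
      rw [← Real.rpow_add hγ]; simp
    have hρρ : ρ ^ (-α) * ρ ^ α = 1 := by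
      rw [← Real.rpow_add hρ0]; simp
    constructor
    · rw [hrw, inv_mul_le_iff₀ hC0]
      have h1 : ρ ^ (t * (i k : ℝ)) ≤ ρ ^ (α * k - α) :=
        Real.rpow_le_rpow_of_exponent_ge hρ0 hρ1.le (hfl' k)
      have h2 : ρ ^ (α * k - α) = ρ ^ (α * k) * ρ ^ (-α) := by
        rw [← Real.rpow_add hρ0]; ring_nf
      calc γ ^ t * ρ ^ (t * (i k : ℝ)) ≤ γ ^ t * (ρ ^ (α * k) * ρ ^ (-α)) := by nlinarith
        _ = (γ ^ t * ρ ^ (-α)) * ρ ^ (α * k) := by ring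
        _ ≤ C * ρ ^ (α * k) := by nlinarith
    · rw [hrw]
      have h1 : ρ ^ (α * k + α) ≤ ρ ^ (t * (i (k+1) : ℝ)) := by
        apply Real.rpow_le_rpow_of_exponent_ge hρ0 hρ1.le
        have := hfl (k + 1)
        push_cast at this ⊢
        nlinarith
      have h2 : ρ ^ (α * k + α) = ρ ^ (α * k) * ρ ^ α := by
        rw [← Real.rpow_add hρ0]
      have hρa : (0:ℝ) < ρ ^ α := Real.rpow_pos_of_pos hρ0 α
      have key : (1:ℝ) ≤ C * γ ^ t * ρ ^ α := by
        have heq : γ ^ (-t) * ρ ^ (-α) * (γ ^ t * ρ ^ α) = 1 := by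
          nlinarith [hγγ, hρρ]
        calc (1:ℝ) = γ ^ (-t) * ρ ^ (-α) * (γ ^ t * ρ ^ α) := heq.symm
          _ ≤ C * (γ ^ t * ρ ^ α) := by
              exact mul_le_mul_of_nonneg_right hC2 (by positivity)
          _ = C * γ ^ t * ρ ^ α := by ring
      calc ρ ^ (α * k) = 1 * ρ ^ (α * k) := by ring
        _ ≤ (C * γ ^ t * ρ ^ α) * ρ ^ (α * k) := mul_le_mul_of_nonneg_right key hραk.le
        _ = C * (γ ^ t * (ρ ^ (α * k) * ρ ^ α)) := by ring
        _ = C * (γ ^ t * ρ ^ (α * k + α)) := by rw [h2]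
        _ ≤ C * (γ ^ t * ρ ^ (t * (i (k+1) : ℝ))) :=
            mul_le_mul_of_nonneg_left (mul_le_mul_of_nonneg_left h1 hγt.le) hC0.le
end
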